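/- STRIPE-X strongly separates encoding from non-encoding explanations: if H(y) and H(y|x) are finite, e is encoding (so φ(e) > 0) and e' is non-encoding (so φ(e') = 0), then for all α > I(y;x)/φ(e), the penalized score STRIPE-X_α(q, e') = EVAL-X(q,e') − αφ(e') strictly exceeds STRIPE-X_α(q, e) = EVAL-X(q,e) − αφ(e). -/

import Mathlib

open scoped Classical

/-- Probability of an event under a probability mass function on a finite space. -/
noncomputable def Pr {Ω : Type*} [Fintype Ω] (p : Ω → ℝ) (E : Ω → Prop) : ℝ :=
  ∑ ω, if E ω then p ω else 0

/-- Conditional probability `P(A | B)`. -/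
noncomputable def cPr {Ω : Type*} [Fintype Ω] (p : Ω → ℝ) (A B : Ω → Prop) : ℝ :=
  Pr p (fun ω => A ω ∧ B ω) / Pr p B

/-- Conditional independence of a (finite-valued) random variable `y` and a binary
variable given by the event `E`, given the conditioning event `C`. -/
def CondIndepBin {Ω Y : Type*} [Fintype Ω] (p : Ω → ℝ) (y : Ω → Y) (E C : Ω → Prop) : Prop :=
  ∀ y₀ : Y,
    cPr p (fun ω => y ω = y₀ ∧ E ω) C
        = cPr p (fun ω => y ω = y₀) C * cPr p E C ∧
    cPr p (fun ω => y ω = y₀ ∧ ¬ E ω) C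
        = cPr p (fun ω => y ω = y₀) C * cPr p (fun ω => ¬ E ω) C

/-- Conditional mutual information `I(E ; y | C)` between the binary variable given by the
event `E` and the finite-valued variable `y`, computed under the conditional distribution
given the event `C`. -/
noncomputable def condMI {Ω Y : Type*} [Fintype Ω] [Fintype Y]
    (p : Ω → ℝ) (y : Ω → Y) (E C : Ω → Prop) : ℝ :=
  ∑ y₀ : Y,
    (cPr p (fun ω => y ω = y₀ ∧ E ω) C *
        Real.log (cPr p (fun ω => y ω = y₀ ∧ E ω) C
          / (cPr p (fun ω => y ω = y₀) C * cPr p E C)) +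
     cPr p (fun ω => y ω = y₀ ∧ ¬ E ω) C *
        Real.log (cPr p (fun ω => y ω = y₀ ∧ ¬ E ω) C
          / (cPr p (fun ω => y ω = y₀) C * cPr p (fun ω => ¬ E ω) C)))

/-- The EVAL-X score of an explanation: expected log-likelihood of the label under the
conditional given the explanation's values. -/
noncomputable def evalX {Ω A Y : Type*} [Fintype Ω] {d : ℕ}
    (p : Ω → ℝ) (x : Ω → Fin d → A) (y : Ω → Y)
    (e : (Fin d → A) → (Fin d → Bool)) : ℝ :=
  ∑ ω, p ω * Real.log (cPr p (fun ω' => y ω' = y ω)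
      (fun ω' => ∀ i, e (x ω) i = true → x ω' i = x ω i))

/-- The ENCODE-METER `φ(e)`: expectation over the explanation distribution of
`I(E_v ; y | x_v = a)`. -/
noncomputable def encodeMeter {Ω A Y : Type*} [Fintype Ω] [Fintype Y] {d : ℕ}
    (p : Ω → ℝ) (x : Ω → Fin d → A) (y : Ω → Y)
    (e : (Fin d → A) → (Fin d → Bool)) : ℝ :=
  ∑ ω, p ω * condMI p y (fun ω' => e (x ω') = e (x ω))
      (fun ω' => ∀ i, e (x ω) i = true → x ω' i = x ω i)

/-- The mutual information `I(y ; x) = E[log (P(y|x)/P(y))]`. -/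
noncomputable def mutInfoYX {Ω A Y : Type*} [Fintype Ω] {d : ℕ}
    (p : Ω → ℝ) (x : Ω → Fin d → A) (y : Ω → Y) : ℝ :=
  ∑ ω, p ω * Real.log (cPr p (fun ω' => y ω' = y ω) (fun ω' => x ω' = x ω)
      / Pr p (fun ω' => y ω' = y ω))

/-!
The argument sandwiches the two penalized scores around `E[log P(y)] = -H(y)`. By Gibbs'
inequality, conditioning on a coarser event can only lower the expected log-likelihood, so
`EVAL-X(e) ≤ E[log P(y | x)] = E[log P(y)] + I(y;x)`, whence
`EVAL-X(e) - α φ(e) < E[log P(y)]` as soon as `α φ(e) > I(y;x)`. For a non-encoding `e'`,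
conditional independence lets us add the event `e'(x') = e'(x)` to the conditioning, so that
`EVAL-X(e')` becomes the expected log-likelihood given the selected features together with
their positions, which by Gibbs again is at least `E[log P(y)]`; moreover `φ(e') = 0`.
-/

open Real Finset

section Probability

variable {Ω : Type*} [Fintype Ω] {p : Ω → ℝ}

lemma Pr_eq_sum_filter (p : Ω → ℝ) (E : Ω → Prop) [DecidablePred E] :
    Pr p E = ∑ ω ∈ univ with E ω, p ω := by
  rw [sum_filter, Pr]
  congr!

lemma Pr_pos (hp : ∀ ω, 0 < p ω) {E : Ω → Prop} (ω₀ : Ω) (h : E ω₀) : 0 < Pr p E := by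
  rw [Pr_eq_sum_filter]
  exact sum_pos (fun ω _ => hp ω) ⟨ω₀, mem_filter.mpr ⟨mem_univ _, h⟩⟩

lemma Pr_nonneg (hp : ∀ ω, 0 < p ω) (E : Ω → Prop) : 0 ≤ Pr p E := by
  rw [Pr_eq_sum_filter]
  exact sum_nonneg fun ω _ => (hp ω).le

lemma cPr_pos (hp : ∀ ω, 0 < p ω) {A B : Ω → Prop} (ω₀ : Ω) (hA : A ω₀) (hB : B ω₀) :
    0 < cPr p A B :=
  div_pos (Pr_pos hp ω₀ ⟨hA, hB⟩) (Pr_pos hp ω₀ hB)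

lemma cPr_nonneg (hp : ∀ ω, 0 < p ω) (A B : Ω → Prop) : 0 ≤ cPr p A B :=
  div_nonneg (Pr_nonneg hp _) (Pr_nonneg hp _)

lemma cPr_true (hsum : ∑ ω, p ω = 1) (A : Ω → Prop) :
    cPr p A (fun _ => True) = Pr p A := by
  simp [cPr, Pr, hsum]

lemma sum_Pr_fiber_and {Y : Type*} [Fintype Y] (p : Ω → ℝ) (y : Ω → Y) (B : Ω → Prop) :
    ∑ y₀ : Y, Pr p (fun ω => y ω = y₀ ∧ B ω) = Pr p B := by
  unfold Pr
  rw [sum_comm]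
  refine sum_congr rfl fun ω _ => ?_
  by_cases hB : B ω <;> simp [hB]

lemma sum_cPr_fiber {Y : Type*} [Fintype Y] (p : Ω → ℝ) (y : Ω → Y) {B : Ω → Prop}
    (hB : Pr p B ≠ 0) : ∑ y₀ : Y, cPr p (fun ω => y ω = y₀) B = 1 := by
  unfold cPr
  rw [← sum_div, sum_Pr_fiber_and, div_self hB]

lemma sum_Pr_fiber {β : Type*} [DecidableEq β] (hsum : ∑ ω, p ω = 1) (X : Ω → β) :
    ∑ b ∈ univ.image X, Pr p (fun ω => X ω = b) = 1 := by
  simp only [Pr_eq_sum_filter]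
  rw [sum_fiberwise_of_maps_to (fun ω _ => mem_image_of_mem X (mem_univ ω)), hsum]

lemma sum_mul_div_Pr_fiber {β : Type*} [DecidableEq β] (hp : ∀ ω, 0 < p ω) (Z : Ω → β)
    (t : β → ℝ) :
    ∑ ω, p ω * t (Z ω) / Pr p (fun ω' => Z ω' = Z ω) = ∑ b ∈ univ.image Z, t b := by
  refine (sum_image' _ fun ω₀ _ => ?_).symm
  have hfiber : ∀ ω ∈ univ.filter (fun ω => Z ω = Z ω₀),
      p ω * t (Z ω) / Pr p (fun ω' => Z ω' = Z ω)
        = p ω * (t (Z ω₀) / Pr p (fun ω' => Z ω' = Z ω₀)) := fun ω hω => by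
    rw [(mem_filter.mp hω).2, mul_div_assoc]
  rw [sum_congr rfl hfiber, ← sum_mul, ← Pr_eq_sum_filter,
    mul_div_cancel₀ _ (Pr_pos (E := fun ω => Z ω = Z ω₀) hp ω₀ rfl).ne']

/-- Gibbs' inequality. -/
lemma sum_mul_log_le_of_sum_mul_div_le_one (hp : ∀ ω, 0 < p ω) (hsum : ∑ ω, p ω = 1)
    {f g : Ω → ℝ} (hf : ∀ ω, 0 < f ω) (hg : ∀ ω, 0 < g ω)
    (h : ∑ ω, p ω * (f ω / g ω) ≤ 1) :
    ∑ ω, p ω * log (f ω) ≤ ∑ ω, p ω * log (g ω) := by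
  have hpoint : ∀ ω, p ω * log (f ω) - p ω * log (g ω) ≤ p ω * (f ω / g ω) - p ω := by
    intro ω
    have := log_le_sub_one_of_pos (div_pos (hf ω) (hg ω))
    rw [log_div (hf ω).ne' (hg ω).ne'] at this
    nlinarith [hp ω]
  have := sum_le_sum fun ω (_ : ω ∈ univ) => hpoint ω
  rw [sum_sub_distrib, sum_sub_distrib, hsum] at this
  linarith

end Probability

section ConditionalIndependence

variable {Ω Y : Type*} [Fintype Ω] {p : Ω → ℝ}

lemma cPr_and_eq_of_condIndepBin (hp : ∀ ω, 0 < p ω) {y : Ω → Y} {E C : Ω → Prop}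
    (h : CondIndepBin p y E C) (y₀ : Y) (ω₀ : Ω) (hω₀ : E ω₀ ∧ C ω₀) :
    cPr p (fun ω => y ω = y₀) (fun ω => E ω ∧ C ω) = cPr p (fun ω => y ω = y₀) C := by
  have hEC := Pr_pos (E := fun ω => E ω ∧ C ω) hp ω₀ hω₀
  have hC := Pr_pos hp ω₀ hω₀.2
  have hci := (h y₀).1
  simp only [cPr, and_assoc] at hci ⊢
  rw [div_eq_div_iff hEC.ne' hC.ne']
  field_simp at hci
  linarith

lemma condMI_eq_zero_of_condIndepBin [Fintype Y] {y : Ω → Y} {E C : Ω → Prop}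
    (h : CondIndepBin p y E C) : condMI p y E C = 0 := by
  refine sum_eq_zero fun y₀ _ => ?_
  rw [← (h y₀).1, ← (h y₀).2]
  simp

end ConditionalIndependence

section LogLikelihood

variable {Ω Y : Type*} [Fintype Ω] {p : Ω → ℝ}

/-- `E[log P(y | C ω)]`, where `C ω` is the event an outcome `ω` conditions on. -/
noncomputable def condLogLik (p : Ω → ℝ) (y : Ω → Y) (C : Ω → Ω → Prop) : ℝ :=
  ∑ ω, p ω * log (cPr p (fun ω' => y ω' = y ω) (C ω))

theorem condLogLik_le_condLogLik_fiber [Fintype Y] {β : Type*} (hp : ∀ ω, 0 < p ω)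
    (hsum : ∑ ω, p ω = 1) (y : Ω → Y) (X : Ω → β) (C : β → Ω → Prop)
    (hC : ∀ ω, C (X ω) ω) :
    condLogLik p y (fun ω => C (X ω)) ≤ condLogLik p y (fun ω ω' => X ω' = X ω) := by
  refine sum_mul_log_le_of_sum_mul_div_le_one hp hsum (fun ω => cPr_pos hp ω rfl (hC ω))
    (fun ω => cPr_pos hp ω rfl rfl) ?_
  set t : Y × β → ℝ := fun z =>
    cPr p (fun ω => y ω = z.1) (C z.2) * Pr p (fun ω => X ω = z.2) with ht
  have hterm : ∀ ω, p ω * (cPr p (fun ω' => y ω' = y ω) (C (X ω))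
      / cPr p (fun ω' => y ω' = y ω) (fun ω' => X ω' = X ω))
      = p ω * t (y ω, X ω) / Pr p (fun ω' => (y ω', X ω') = (y ω, X ω)) := by
    intro ω
    simp only [ht, cPr, Prod.mk.injEq]
    rw [div_div_eq_mul_div]
    ring
  calc ∑ ω, p ω * (cPr p (fun ω' => y ω' = y ω) (C (X ω))
          / cPr p (fun ω' => y ω' = y ω) (fun ω' => X ω' = X ω))
      = ∑ z ∈ univ.image (fun ω => (y ω, X ω)), t z := by
        rw [sum_congr rfl fun ω _ => hterm ω]
        exact sum_mul_div_Pr_fiber hp (fun ω => (y ω, X ω)) t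
    _ ≤ ∑ z ∈ univ ×ˢ univ.image X, t z := by
        refine sum_le_sum_of_subset_of_nonneg (fun z hz => ?_)
          fun z _ _ => mul_nonneg (cPr_nonneg hp _ _) (Pr_nonneg hp _)
        obtain ⟨ω, _, rfl⟩ := mem_image.mp hz
        exact mem_product.mpr ⟨mem_univ _, mem_image_of_mem X (mem_univ ω)⟩
    _ = ∑ b ∈ univ.image X, Pr p (fun ω => X ω = b) := by
        rw [sum_product_right]
        refine sum_congr rfl fun b hb => ?_
        obtain ⟨ω, _, rfl⟩ := mem_image.mp hb
        simp only [ht]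
        rw [← sum_mul, sum_cPr_fiber p y (Pr_pos hp ω (hC ω)).ne', one_mul]
    _ = 1 := sum_Pr_fiber hsum X

lemma mutInfoYX_eq_condLogLik_sub {A : Type*} {d : ℕ} (hp : ∀ ω, 0 < p ω)
    (hsum : ∑ ω, p ω = 1) (x : Ω → Fin d → A) (y : Ω → Y) :
    mutInfoYX p x y
      = condLogLik p y (fun ω ω' => x ω' = x ω) - condLogLik p y (fun _ _ => True) := by
  rw [mutInfoYX, condLogLik, condLogLik, ← sum_sub_distrib]
  refine sum_congr rfl fun ω _ => ?_
  rw [cPr_true hsum, log_div, mul_sub]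
  exacts [ne_of_gt (cPr_pos hp ω rfl rfl), ne_of_gt (Pr_pos hp ω rfl)]

end LogLikelihood

section Explanations

variable {ι A : Type*}

def selectedValues (v : ι → Bool) (a : ι → A) : ι → Option A :=
  fun i => if v i then some (a i) else none

lemma prod_mk_selectedValues_eq_iff {v v' : ι → Bool} {a a' : ι → A} :
    (v', selectedValues v' a') = (v, selectedValues v a)
      ↔ v' = v ∧ ∀ i, v i = true → a' i = a i := by
  simp only [Prod.mk.injEq, and_congr_right_iff]
  rintro rfl
  simp only [funext_iff, selectedValues]
  refine forall_congr' fun i => ?_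
  cases v' i <;> simp

variable {Ω Y : Type*} [Fintype Ω] {d : ℕ} {p : Ω → ℝ}

lemma evalX_le_condLogLik_fiber [Fintype Y] (hp : ∀ ω, 0 < p ω) (hsum : ∑ ω, p ω = 1)
    (x : Ω → Fin d → A) (y : Ω → Y) (e : (Fin d → A) → (Fin d → Bool)) :
    evalX p x y e ≤ condLogLik p y (fun ω ω' => x ω' = x ω) :=
  condLogLik_le_condLogLik_fiber hp hsum y x
    (fun a ω' => ∀ i, e a i = true → x ω' i = a i) fun _ _ _ => rfl

/-- Conditional independence lets one add the event `e (x ω') = e (x ω)` to the conditioning. -/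
lemma evalX_eq_condLogLik_of_condIndepBin (hp : ∀ ω, 0 < p ω)
    (x : Ω → Fin d → A) (y : Ω → Y) (e : (Fin d → A) → (Fin d → Bool))
    (hnon : ∀ ω, CondIndepBin p y (fun ω' => e (x ω') = e (x ω))
        (fun ω' => ∀ i, e (x ω) i = true → x ω' i = x ω i)) :
    evalX p x y e = condLogLik p y (fun ω ω' =>
      (e (x ω'), selectedValues (e (x ω')) (x ω'))
        = (e (x ω), selectedValues (e (x ω)) (x ω))) := by
  refine sum_congr rfl fun ω _ => ?_
  simp only [prod_mk_selectedValues_eq_iff]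
  rw [cPr_and_eq_of_condIndepBin hp (hnon ω) (y ω) ω ⟨rfl, fun _ _ => rfl⟩]

lemma condLogLik_true_le_evalX_of_condIndepBin [Fintype Y] (hp : ∀ ω, 0 < p ω)
    (hsum : ∑ ω, p ω = 1) (x : Ω → Fin d → A) (y : Ω → Y)
    (e : (Fin d → A) → (Fin d → Bool))
    (hnon : ∀ ω, CondIndepBin p y (fun ω' => e (x ω') = e (x ω))
        (fun ω' => ∀ i, e (x ω) i = true → x ω' i = x ω i)) :
    condLogLik p y (fun _ _ => True) ≤ evalX p x y e := by
  rw [evalX_eq_condLogLik_of_condIndepBin hp x y e hnon]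
  exact condLogLik_le_condLogLik_fiber hp hsum y
    (fun ω => (e (x ω), selectedValues (e (x ω)) (x ω))) (fun _ _ => True) fun _ => trivial

lemma encodeMeter_eq_zero_of_condIndepBin [Fintype Y] (x : Ω → Fin d → A) (y : Ω → Y)
    (e : (Fin d → A) → (Fin d → Bool))
    (hnon : ∀ ω, CondIndepBin p y (fun ω' => e (x ω') = e (x ω))
        (fun ω' => ∀ i, e (x ω) i = true → x ω' i = x ω i)) :
    encodeMeter p x y e = 0 :=
  sum_eq_zero fun ω _ => by rw [condMI_eq_zero_of_condIndepBin (hnon ω), mul_zero]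

end Explanations

/-- STRIPE-X strongly separates encoding from non-encoding explanations: if
`e` is encoding (`φ(e) > 0`) and `e'` is non-encoding, then for every
`α > I(y;x)/φ(e)` the penalized score of `e'` strictly exceeds that of `e`. -/
theorem stripex_strong_detection
    {Ω A Y : Type*} [Fintype Ω] [Fintype Y] {d : ℕ}
    (p : Ω → ℝ) (hp : ∀ ω, 0 < p ω) (hsum : ∑ ω, p ω = 1)
    (x : Ω → Fin d → A) (y : Ω → Y)
    (e e' : (Fin d → A) → (Fin d → Bool))
    (henc : 0 < encodeMeter p x y e)
    (hnon : ∀ ω, CondIndepBin p y (fun ω' => e' (x ω') = e' (x ω))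
        (fun ω' => ∀ i, e' (x ω) i = true → x ω' i = x ω i)) :
    ∀ α : ℝ, mutInfoYX p x y / encodeMeter p x y e < α →
      evalX p x y e - α * encodeMeter p x y e
        < evalX p x y e' - α * encodeMeter p x y e' := by
  intro α hα
  have hI : mutInfoYX p x y < α * encodeMeter p x y e := (div_lt_iff₀ henc).mp hα
  rw [mutInfoYX_eq_condLogLik_sub hp hsum] at hI
  have hupper := evalX_le_condLogLik_fiber hp hsum x y e
  have hlower := condLogLik_true_le_evalX_of_condIndepBin hp hsum x y e' hnon
  rw [encodeMeter_eq_zero_of_condIndepBin x y e' hnon, mul_zero, sub_zero]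
  linarith
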